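/- Ω decomposes as a disjoint union Ω = ζ(Ω) ⊔ σ(ζ(Ω)): every w ∈ Ω lies in exactly one of ζ(Ω) and σ(ζ(Ω)). -/

import Mathlib

/-!
Cutting `w ∈ Ω` into the blocks `a (1 - a)` of `ζ` at even positions exhibits `w ∈ ζ(Ω)`,
cutting it at odd positions exhibits `w ∈ σ(ζ(Ω))`. Inside `ζ(t)` two equal adjacent letters
straddle a block boundary, so in a Thue–Morse factor all squares `aa` start at positions of one
parity; hence one of the two cuttings works. Both cannot work: `w` would alternate and contain
`ababa`, whose desubstitution contains `aaa`. The word read off from a cutting lies in `Ω`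
because `ζ(v)` is a Thue–Morse factor only if `v` is: at an even offset `v` is read off
directly, at an odd one `ζ(v)` alternates and therefore has length at most 4.
-/

open Fin.NatCast in
/-- Thue-Morse sequence: parity of number of 1s in binary expansion. -/
def tm (n : ℕ) : Fin 2 := ((Nat.digits 2 n).count 1 : Fin 2)

/-- Thue-Morse substitution on letters. -/
def zetaWord (a : Fin 2) : List (Fin 2) := [a, 1 - a]

/-- Thue-Morse substitution on words. -/
def zetaL (w : List (Fin 2)) : List (Fin 2) := w.flatMap zetaWord

/-- Shift on bi-infinite sequences. -/
def shiftZ (w : ℤ → Fin 2) : ℤ → Fin 2 := fun n => w (n + 1)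

/-- ζ on bi-infinite sequences: ζ(w)(2n)=w(n), ζ(w)(2n+1)=1-w(n). -/
def zetaZ (w : ℤ → Fin 2) : ℤ → Fin 2 :=
  fun n => if n % 2 = 0 then w (n / 2) else 1 - w (n / 2)

/-- `v` occurs as a factor of the bi-infinite word `w`. -/
def IsFactorZ (v : List (Fin 2)) (w : ℤ → Fin 2) : Prop :=
  ∃ i : ℤ, ∀ k : ℕ, k < v.length → w (i + k) = v.getD k 0

/-- The Thue-Morse subshift: bi-infinite words all of whose factors occur in some ζⁿ(0). -/
def Omega : Set (ℤ → Fin 2) :=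
  {w | ∀ v : List (Fin 2), IsFactorZ v w → ∃ n : ℕ, v <:+: zetaL^[n] [0]}


lemma List.infix_of_forall_getElem?_eq {α : Type*} {x l : List α} (k : ℕ)
    (h : ∀ i (hi : i < x.length), l[i + k]? = some x[i]) : x <:+: l := by
  rcases x.eq_nil_or_concat' with rfl | ⟨y, a, rfl⟩
  · exact List.nil_infix
  obtain ⟨hlt, -⟩ := List.getElem?_eq_some_iff.1 (h y.length (by simp))
  refine List.infix_iff_getElem?.2 ⟨k, ?_, h⟩
  simp only [List.length_append, List.length_singleton]
  omega

lemma zetaL_cons (a : Fin 2) (l : List (Fin 2)) : zetaL (a :: l) = a :: (1 - a) :: zetaL l := rfl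

lemma zetaL_length (l : List (Fin 2)) : (zetaL l).length = 2 * l.length := by
  induction l with
  | nil => rfl
  | cons a l ih => simp only [zetaL_cons, List.length_cons, ih]; ring

lemma zetaL_getElem?_two_mul (t : List (Fin 2)) (m : ℕ) : (zetaL t)[2 * m]? = t[m]? := by
  induction t generalizing m with
  | nil => rfl
  | cons a t ih =>
    cases m with
    | zero => rfl
    | succ m => simpa only [zetaL_cons, Nat.mul_succ, List.getElem?_cons_succ] using ih m

lemma zetaL_getElem?_two_mul_add_one (t : List (Fin 2)) (m : ℕ) :
    (zetaL t)[2 * m + 1]? = t[m]?.map (1 - ·) := by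
  induction t generalizing m with
  | nil => rfl
  | cons a t ih =>
    cases m with
    | zero => rfl
    | succ m => simpa only [zetaL_cons, Nat.mul_succ, List.getElem?_cons_succ] using ih m

lemma iterate_zetaL_infix_succ (n : ℕ) : zetaL^[n] [0] <:+: zetaL^[n + 1] [0] := by
  induction n with
  | zero => decide
  | succ n ih =>
    rw [Function.iterate_succ_apply', Function.iterate_succ_apply']
    exact ih.flatMap zetaWord

def tmLanguage : Set (List (Fin 2)) := {v | ∃ n : ℕ, v <:+: zetaL^[n] [0]}

namespace tmLanguage

lemma of_infix {v x : List (Fin 2)} (hvx : v <:+: x) (hx : x ∈ tmLanguage) : v ∈ tmLanguage :=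
  let ⟨n, hn⟩ := hx
  ⟨n, hvx.trans hn⟩

lemma exists_infix_zetaL {v : List (Fin 2)} (hv : v ∈ tmLanguage) :
    ∃ t ∈ tmLanguage, v <:+: zetaL t := by
  obtain ⟨n, hn⟩ := hv
  refine ⟨zetaL^[n] [0], ⟨n, List.infix_refl _⟩, ?_⟩
  rw [← Function.iterate_succ_apply' zetaL]
  exact hn.trans (iterate_zetaL_infix_succ n)

lemma of_length_le_two {v : List (Fin 2)} (hv : v.length ≤ 2) : v ∈ tmLanguage := by
  refine ⟨3, ?_⟩
  rcases v with _ | ⟨x, _ | ⟨y, _ | ⟨z, r⟩⟩⟩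
  · decide
  · fin_cases x <;> decide
  · fin_cases x <;> fin_cases y <;> decide
  · simp at hv

end tmLanguage

lemma getElem_ne_getElem_succ_of_occurs_zetaL {x t : List (Fin 2)} {s : ℕ}
    (hocc : ∀ i (h : i < x.length), (zetaL t)[i + s]? = some x[i]) {k : ℕ}
    (hk : k + 1 < x.length) (heven : Even (k + s)) : x[k] ≠ x[k + 1] := by
  obtain ⟨m, hm⟩ := heven
  have h0 := hocc k (by omega)
  have h1 := hocc (k + 1) (by omega)
  rw [hm, ← two_mul, zetaL_getElem?_two_mul] at h0
  rw [show k + 1 + s = 2 * m + 1 by omega, zetaL_getElem?_two_mul_add_one, h0] at h1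
  simp only [Option.map_some, Option.some.injEq] at h1
  omega

lemma triple_not_mem_tmLanguage (a : Fin 2) : [a, a, a] ∉ tmLanguage := by
  intro h
  obtain ⟨t, -, hinf⟩ := tmLanguage.exists_infix_zetaL h
  obtain ⟨s, -, hocc⟩ := List.infix_iff_getElem?.1 hinf
  rcases Nat.even_or_odd s with hs | hs
  · exact getElem_ne_getElem_succ_of_occurs_zetaL hocc (k := 0) (by simp) (by simpa using hs) rfl
  · exact getElem_ne_getElem_succ_of_occurs_zetaL hocc (k := 1) (by simp)
      (by rw [add_comm]; exact hs.add_one) rfl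

lemma alternating_five_not_mem_tmLanguage (a : Fin 2) :
    [a, 1 - a, a, 1 - a, a] ∉ tmLanguage := by
  intro h
  obtain ⟨t, ht, hinf⟩ := tmLanguage.exists_infix_zetaL h
  obtain ⟨s, -, hocc⟩ := List.infix_iff_getElem?.1 hinf
  rcases Nat.even_or_odd' s with ⟨m, rfl | rfl⟩
  · refine triple_not_mem_tmLanguage a
      (tmLanguage.of_infix (List.infix_of_forall_getElem?_eq m fun i hi => ?_) ht)
    simp only [List.length_cons, List.length_nil] at hi
    have := hocc (2 * i) (by simp only [List.length_cons, List.length_nil]; omega)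
    rw [← mul_add, zetaL_getElem?_two_mul] at this
    rw [this]
    interval_cases i <;> rfl
  · refine triple_not_mem_tmLanguage (1 - a)
      (tmLanguage.of_infix (List.infix_of_forall_getElem?_eq m fun i hi => ?_) ht)
    simp only [List.length_cons, List.length_nil] at hi
    rcases i with _ | i
    · have := hocc 0 (by simp)
      rw [zero_add, zetaL_getElem?_two_mul_add_one, Option.map_eq_some_iff] at this
      obtain ⟨b, hb, hba⟩ := this
      rw [zero_add, hb]
      simp only [List.getElem_cons_zero, Option.some.injEq] at hba ⊢
      omega
    · obtain hi : i < 2 := by omega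
      have := hocc (2 * i + 1) (by simp only [List.length_cons, List.length_nil]; omega)
      rw [show 2 * i + 1 + (2 * m + 1) = 2 * (i + 1 + m) by ring, zetaL_getElem?_two_mul] at this
      rw [this]
      interval_cases i <;> rfl

lemma length_le_four_of_forall_getElem_ne {x : List (Fin 2)} (hx : x ∈ tmLanguage)
    (hne : ∀ k (hk : k + 1 < x.length), x[k] ≠ x[k + 1]) : x.length ≤ 4 := by
  by_contra! hlen
  set a : Fin 2 := x[0] with ha
  have h0 : a ≠ x[1] := hne 0 (by omega)
  have h1 : x[1] ≠ x[2] := hne 1 (by omega)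
  have h2 : x[2] ≠ x[3] := hne 2 (by omega)
  have h3 : x[3] ≠ x[4] := hne 3 (by omega)
  have hprefix : [a, 1 - a, a, 1 - a, a] = x.take 5 := by
    refine List.ext_getElem ?_ fun i hi _ => ?_
    · simp only [List.length_cons, List.length_nil, List.length_take]
      omega
    simp only [List.length_cons, List.length_nil] at hi
    interval_cases i <;>
      simp only [List.getElem_cons_succ, List.getElem_cons_zero, List.getElem_take] <;> omega
  refine alternating_five_not_mem_tmLanguage a (tmLanguage.of_infix ?_ hx)
  rw [hprefix]
  exact (List.take_prefix 5 x).isInfix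

lemma even_add_of_getElem_eq_getElem_succ {x : List (Fin 2)} (hx : x ∈ tmLanguage) {i j : ℕ}
    (hi : i + 1 < x.length) (hj : j + 1 < x.length) (hxi : x[i] = x[i + 1])
    (hxj : x[j] = x[j + 1]) : Even (i + j) := by
  obtain ⟨t, -, hinf⟩ := tmLanguage.exists_infix_zetaL hx
  obtain ⟨s, -, hocc⟩ := List.infix_iff_getElem?.1 hinf
  have hi' : ¬ Even (i + s) := fun h => getElem_ne_getElem_succ_of_occurs_zetaL hocc hi h hxi
  have hj' : ¬ Even (j + s) := fun h => getElem_ne_getElem_succ_of_occurs_zetaL hocc hj h hxj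
  rw [Nat.even_iff] at hi' hj' ⊢
  omega

lemma tmLanguage.of_zetaL {v : List (Fin 2)} (hv : zetaL v ∈ tmLanguage) : v ∈ tmLanguage := by
  obtain ⟨t, ht, hinf⟩ := tmLanguage.exists_infix_zetaL hv
  obtain ⟨s, -, hocc⟩ := List.infix_iff_getElem?.1 hinf
  rcases Nat.even_or_odd' s with ⟨m, rfl | rfl⟩
  · refine tmLanguage.of_infix (List.infix_of_forall_getElem?_eq m fun i hi => ?_) ht
    have := hocc (2 * i) (by rw [zetaL_length]; omega)
    rwa [← mul_add, zetaL_getElem?_two_mul, ← List.getElem?_eq_getElem, zetaL_getElem?_two_mul,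
      List.getElem?_eq_getElem hi] at this
  · -- at an odd offset the blocks of `ζ(v)` and of `ζ(t)` interleave, so `ζ(v)` alternates
    have hself : ∀ i (h : i < (zetaL v).length), (zetaL v)[i + 0]? = some (zetaL v)[i] :=
      fun i h => List.getElem?_eq_getElem h
    have hshort := length_le_four_of_forall_getElem_ne hv fun k hk => by
      rcases Nat.even_or_odd k with hk' | hk'
      · exact getElem_ne_getElem_succ_of_occurs_zetaL hself hk hk'
      · exact getElem_ne_getElem_succ_of_occurs_zetaL hocc hk
          (hk'.add_odd (odd_two_mul_add_one m))
    exact tmLanguage.of_length_le_two (by rw [zetaL_length] at hshort; omega)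

lemma zetaZ_two_mul (u : ℤ → Fin 2) (k : ℤ) : zetaZ u (2 * k) = u k := by
  simp [zetaZ]

lemma zetaZ_two_mul_add_one (u : ℤ → Fin 2) (k : ℤ) : zetaZ u (2 * k + 1) = 1 - u k := by
  simp only [zetaZ, if_neg (show ¬ (2 * k + 1) % 2 = 0 by omega),
    show (2 * k + 1) / 2 = k by omega]

def window (w : ℤ → Fin 2) (i : ℤ) (n : ℕ) : List (Fin 2) :=
  List.ofFn fun k : Fin n => w (i + k)

@[simp]
lemma length_window (w : ℤ → Fin 2) (i : ℤ) (n : ℕ) : (window w i n).length = n :=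
  List.length_ofFn

@[simp]
lemma getElem_window (w : ℤ → Fin 2) (i : ℤ) (n k : ℕ) (hk : k < (window w i n).length) :
    (window w i n)[k] = w (i + k) :=
  List.getElem_ofFn ..

lemma window_succ (w : ℤ → Fin 2) (i : ℤ) (n : ℕ) :
    window w i (n + 1) = w i :: window w (i + 1) n := by
  simp only [window, List.ofFn_succ, Fin.val_zero, Fin.val_succ, Nat.cast_zero, add_zero,
    Nat.cast_add, Nat.cast_one, add_comm, add_left_comm]

lemma window_comp_add_const (w : ℤ → Fin 2) (c i : ℤ) (n : ℕ) :
    window (fun m => w (m + c)) i n = window w (i + c) n := by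
  simp only [window, add_right_comm]

lemma zetaL_window (u : ℤ → Fin 2) (j : ℤ) (n : ℕ) :
    zetaL (window u j n) = window (zetaZ u) (2 * j) (2 * n) := by
  induction n generalizing j with
  | zero => rfl
  | succ n ih =>
    rw [window_succ, zetaL_cons, ih, Nat.mul_succ, window_succ, window_succ, zetaZ_two_mul,
      zetaZ_two_mul_add_one, show 2 * j + 1 + 1 = 2 * (j + 1) by ring]

lemma isFactorZ_iff_exists_window_eq {v : List (Fin 2)} {w : ℤ → Fin 2} :
    IsFactorZ v w ↔ ∃ i, window w i v.length = v := by
  refine exists_congr fun i => ⟨fun h => List.ext_getElem (length_window ..) fun k hk hk' => ?_,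
    fun h k hk => ?_⟩
  · rw [getElem_window, h k hk', List.getD_eq_getElem]
  · rw [List.getD_eq_getElem _ _ hk, ← List.getElem_of_eq h (by simpa), getElem_window]

lemma window_mem_tmLanguage {w : ℤ → Fin 2} (hw : w ∈ Omega) (i : ℤ) (n : ℕ) :
    window w i n ∈ tmLanguage :=
  hw _ (isFactorZ_iff_exists_window_eq.2 ⟨i, by rw [length_window]⟩)

lemma even_sub_of_eq_succ {w : ℤ → Fin 2} (hw : w ∈ Omega) {p q : ℤ} (hp : w p = w (p + 1))
    (hq : w q = w (q + 1)) : Even (p - q) := by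
  set i := min p q
  set a := (p - i).toNat
  set b := (q - i).toNat
  have hx := window_mem_tmLanguage hw i ((max p q - i).toNat + 2)
  have hab := even_add_of_getElem_eq_getElem_succ hx (i := a) (j := b)
    (by simp only [length_window]; omega) (by simp only [length_window]; omega)
    (by simp only [getElem_window]; convert hp using 2 <;> push_cast <;> omega)
    (by simp only [getElem_window]; convert hq using 2 <;> push_cast <;> omega)
  rw [Nat.even_iff] at hab
  rw [Int.even_iff]
  omega

def PairsDistinct (w : ℤ → Fin 2) (c : ℤ) : Prop :=
  ∀ k : ℤ, w (2 * k + c) ≠ w (2 * k + c + 1)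

lemma pairsDistinct_zetaZ (u : ℤ → Fin 2) : PairsDistinct (zetaZ u) 0 := fun k => by
  rw [add_zero, zetaZ_two_mul, zetaZ_two_mul_add_one]
  omega

lemma pairsDistinct_shiftZ_zetaZ (u : ℤ → Fin 2) : PairsDistinct (shiftZ (zetaZ u)) (-1) :=
  fun k => by
    simp only [shiftZ, neg_add_cancel_right, zetaZ_two_mul, zetaZ_two_mul_add_one]
    omega

lemma zetaZ_eq_of_pairsDistinct {w : ℤ → Fin 2} {c : ℤ} (h : PairsDistinct w c) :
    zetaZ (fun n => w (2 * n + c)) = fun m => w (m + c) := by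
  funext m
  rcases Int.even_or_odd' m with ⟨k, rfl | rfl⟩
  · rw [zetaZ_two_mul]
  · rw [zetaZ_two_mul_add_one, add_right_comm]
    have := h k
    omega

lemma mem_Omega_of_pairsDistinct {w : ℤ → Fin 2} (hw : w ∈ Omega) {c : ℤ}
    (h : PairsDistinct w c) : (fun n => w (2 * n + c)) ∈ Omega := by
  intro v hv
  obtain ⟨j, hj⟩ := isFactorZ_iff_exists_window_eq.1 hv
  show v ∈ tmLanguage
  rw [← hj]
  apply tmLanguage.of_zetaL
  rw [zetaL_window, zetaZ_eq_of_pairsDistinct h, window_comp_add_const]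
  exact window_mem_tmLanguage hw _ _

lemma pairsDistinct_zero_or_neg_one {w : ℤ → Fin 2} (hw : w ∈ Omega) :
    PairsDistinct w 0 ∨ PairsDistinct w (-1) := by
  by_contra! h
  simp only [PairsDistinct, not_forall, not_not] at h
  obtain ⟨⟨k, hk⟩, ⟨l, hl⟩⟩ := h
  have := even_sub_of_eq_succ hw hk hl
  rw [Int.even_iff] at this
  omega

lemma not_pairsDistinct_zero_and_neg_one {w : ℤ → Fin 2} (hw : w ∈ Omega) :
    ¬ (PairsDistinct w 0 ∧ PairsDistinct w (-1)) := by
  rintro ⟨h0, h1⟩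
  have hne (n : ℤ) : w n ≠ w (n + 1) := by
    rcases Int.even_or_odd' n with ⟨k, rfl | rfl⟩
    · simpa using h0 k
    · have := h1 (k + 1)
      rwa [show 2 * (k + 1) + -1 = 2 * k + 1 by ring] at this
  have := length_le_four_of_forall_getElem_ne (window_mem_tmLanguage hw 0 5) fun k hk => by
    simpa [add_assoc] using hne k
  simp at this

lemma mem_image_zetaZ_iff {w : ℤ → Fin 2} (hw : w ∈ Omega) :
    w ∈ zetaZ '' Omega ↔ PairsDistinct w 0 := by
  refine ⟨?_, fun h => ⟨_, mem_Omega_of_pairsDistinct hw h, ?_⟩⟩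
  · rintro ⟨u, -, rfl⟩
    exact pairsDistinct_zetaZ u
  · simpa using zetaZ_eq_of_pairsDistinct h

lemma mem_image_shiftZ_zetaZ_iff {w : ℤ → Fin 2} (hw : w ∈ Omega) :
    w ∈ shiftZ '' (zetaZ '' Omega) ↔ PairsDistinct w (-1) := by
  refine ⟨?_, fun h => ⟨_, ⟨_, mem_Omega_of_pairsDistinct hw h, rfl⟩, ?_⟩⟩
  · rintro ⟨_, ⟨u, -, rfl⟩, rfl⟩
    exact pairsDistinct_shiftZ_zetaZ u
  · funext m
    simp [shiftZ, zetaZ_eq_of_pairsDistinct h]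

theorem omega_decomposition :
    ∀ w ∈ Omega, Xor' (w ∈ zetaZ '' Omega) (w ∈ shiftZ '' (zetaZ '' Omega)) := by
  intro w hw
  rw [mem_image_zetaZ_iff hw, mem_image_shiftZ_zetaZ_iff hw]
  exact (xor_iff_or_and_not_and _ _).2
    ⟨pairsDistinct_zero_or_neg_one hw, not_pairsDistinct_zero_and_neg_one hw⟩
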